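/- arXiv:2512.10524 — 2 statements merged into one kernel-verified Lean document; each statement's English description precedes it below -/
import Mathlib

section
/- Let p be a probability density on ℝⁿ, σ > 0, p_σ(x) = ∫ N(x; x₀, σ²I) p(x₀) dx₀, and D(x) = E[x₀ | x] the posterior mean under the posterior q(x₀|x) ∝ N(x; x₀, σ²I) p(x₀). Then the Jacobian of the denoiser equals the scaled posterior covariance: σ² · (∂D/∂x) = Cov[x₀ | x], where Cov[x₀|x] = ∫ (x₀ − D(x))(x₀ − D(x))ᵀ q(x₀|x) dx₀. -/
open MeasureTheory Real RealInnerProductSpace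

noncomputable def gpdf (k : ℕ) (σ d2 : ℝ) : ℝ :=
  (2 * Real.pi * σ ^ 2) ^ (-(k : ℝ) / 2) * Real.exp (-d2 / (2 * σ ^ 2))

/-- Density of the multivariate Gaussian `N(μ, σ²I)` on `ℝⁿ` evaluated at `x`. -/
noncomputable def gaussPdf (n : ℕ) (σ : ℝ) (μ x : EuclideanSpace ℝ (Fin n)) : ℝ :=
  gpdf n σ (‖x - μ‖ ^ 2)

/-! Differentiating the Gaussian kernel in `x` multiplies it by `⟪x₀ - x, ·⟫ / σ²`, so `σ² ∇p_σ(x)`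
and `σ² ∇N(x)` are first and second moments of the unnormalised posterior `w = N(x; ·, σ²I) p`,
recentred at `x`. The quotient rule for `D = N / p_σ` combines them into
`(∫ w)⁻¹ ∫ w x₀ x₀ᵀ - D Dᵀ`, the recentring terms cancelling, and this is the posterior
covariance. Nothing Gaussian enters beyond this score identity: the moment identities hold for
any real weight `w`. -/

theorem fderiv_inv_smul_apply {E F : Type*} [NormedAddCommGroup E] [NormedSpace ℝ E]
    [NormedAddCommGroup F] [NormedSpace ℝ F] {f : E → ℝ} {g : E → F} {x : E}
    (hf : DifferentiableAt ℝ f x) (hg : DifferentiableAt ℝ g x) (hfx : f x ≠ 0) (v : E) :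
    fderiv ℝ (fun z => (f z)⁻¹ • g z) x v
      = (f x)⁻¹ • fderiv ℝ g x v - ((f x ^ 2)⁻¹ * fderiv ℝ f x v) • g x := by
  have hinv : HasFDerivAt (fun z => (f z)⁻¹) (-(f x ^ 2)⁻¹ • fderiv ℝ f x) x :=
    (hasDerivAt_inv hfx).comp_hasFDerivAt x hf.hasFDerivAt
  rw [(hinv.fun_smul hg.hasFDerivAt).fderiv]
  simp only [add_apply, smul_apply, neg_apply, ContinuousLinearMap.smulRight_apply, smul_eq_mul,
    neg_smul, sub_eq_add_neg]

theorem integral_div_mul {α : Type*} [MeasurableSpace α] {μ : Measure α} (f g : α → ℝ) (s : ℝ) :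
    ∫ a, f a / s * g a ∂μ = s⁻¹ * ∫ a, f a * g a ∂μ := by
  simp_rw [div_mul_eq_mul_div, integral_div, inv_mul_eq_div]

theorem integral_div_mul_smul {α E : Type*} [MeasurableSpace α] {μ : Measure α}
    [NormedAddCommGroup E] [NormedSpace ℝ E] (f g : α → ℝ) (h : α → E) (s : ℝ) :
    ∫ a, (f a / s * g a) • h a ∂μ = s⁻¹ • ∫ a, (f a * g a) • h a ∂μ := by
  simp_rw [div_mul_eq_mul_div, div_eq_inv_mul, mul_smul, integral_smul]

section WeightedMoments

variable {E : Type*} [NormedAddCommGroup E] [InnerProductSpace ℝ E] [MeasurableSpace E]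
  {μ : Measure E} {w : E → ℝ}

theorem integral_mul_inner_sub [CompleteSpace E] (hw : Integrable w μ)
    (hwy : Integrable (fun y => w y • y) μ) (x v : E) :
    ∫ y, w y * ⟪y - x, v⟫ ∂μ = ⟪∫ y, w y • y ∂μ, v⟫ - ⟪x, v⟫ * ∫ y, w y ∂μ := by
  simp_rw [inner_sub_left, mul_sub, mul_comm (w _) ⟪x, v⟫, ← real_inner_smul_left]
  rw [integral_sub (hwy.inner_const v) (hw.const_mul _), integral_const_mul,
    ← real_inner_comm (∫ y, w y • y ∂μ), ← integral_inner hwy]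
  simp_rw [real_inner_comm v]

variable [OpensMeasurableSpace E] [SecondCountableTopology E]

theorem integrable_mul_inner_smul (hw : AEStronglyMeasurable w μ)
    (hwy2 : Integrable (fun y => w y * ‖y‖ ^ 2) μ) (v : E) :
    Integrable (fun y => (w y * ⟪y, v⟫) • y) μ := by
  refine (hwy2.const_mul ‖v‖).mono
    ((hw.mul (continuous_id.inner continuous_const).aestronglyMeasurable).smul
      aestronglyMeasurable_id) (.of_forall fun y => ?_)
  calc ‖(w y * ⟪y, v⟫) • y‖ = |w y| * |⟪y, v⟫| * ‖y‖ := by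
        rw [norm_smul, norm_mul, Real.norm_eq_abs, Real.norm_eq_abs]
    _ ≤ |w y| * (‖y‖ * ‖v‖) * ‖y‖ := by gcongr; exact abs_real_inner_le_norm y v
    _ = ‖‖v‖ * (w y * ‖y‖ ^ 2)‖ := by
        rw [norm_mul, norm_mul, norm_norm, norm_pow, norm_norm, Real.norm_eq_abs]; ring

theorem integrable_mul_inner_sub_smul (hw : AEStronglyMeasurable w μ)
    (hwy : Integrable (fun y => w y • y) μ) (hwy2 : Integrable (fun y => w y * ‖y‖ ^ 2) μ)
    (x v : E) : Integrable (fun y => (w y * ⟪y - x, v⟫) • y) μ := by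
  simp_rw [inner_sub_left, mul_sub, sub_smul, mul_comm (w _) ⟪x, v⟫, mul_smul ⟪x, v⟫]
  exact (integrable_mul_inner_smul hw hwy2 v).sub (hwy.smul ⟪x, v⟫)

theorem integral_mul_inner_sub_smul (hw : AEStronglyMeasurable w μ)
    (hwy : Integrable (fun y => w y • y) μ) (hwy2 : Integrable (fun y => w y * ‖y‖ ^ 2) μ)
    (x v : E) :
    ∫ y, (w y * ⟪y - x, v⟫) • y ∂μ
      = ∫ y, (w y * ⟪y, v⟫) • y ∂μ - ⟪x, v⟫ • ∫ y, w y • y ∂μ := by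
  simp_rw [inner_sub_left, mul_sub, sub_smul, mul_comm (w _) ⟪x, v⟫, mul_smul ⟪x, v⟫]
  have hxwy : Integrable (fun y => ⟪x, v⟫ • w y • y) μ := hwy.smul ⟪x, v⟫
  rw [integral_sub (integrable_mul_inner_smul hw hwy2 v) hxwy, integral_smul]

theorem integral_mul_inner_sub_smul_sub [CompleteSpace E] (hw : Integrable w μ)
    (hwy : Integrable (fun y => w y • y) μ) (hwy2 : Integrable (fun y => w y * ‖y‖ ^ 2) μ)
    {c : E} (hc : (∫ y, w y ∂μ) • c = ∫ y, w y • y ∂μ) (v : E) :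
    ∫ y, (w y * ⟪y - c, v⟫) • (y - c) ∂μ
      = ∫ y, (w y * ⟪y, v⟫) • y ∂μ - ⟪∫ y, w y • y ∂μ, v⟫ • c := by
  have hlin : Integrable (fun y => w y * ⟪y - c, v⟫) μ := by
    simp_rw [inner_sub_left, mul_sub, mul_comm (w _) ⟪c, v⟫, ← real_inner_smul_left]
    exact (hwy.inner_const v).sub (hw.const_mul _)
  simp_rw [smul_sub]
  rw [integral_sub (integrable_mul_inner_sub_smul hw.aestronglyMeasurable hwy hwy2 c v)
      (hlin.smul_const c), integral_smul_const,
    integral_mul_inner_sub_smul hw.aestronglyMeasurable hwy hwy2, integral_mul_inner_sub hw hwy,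
    ← hc, sub_smul, mul_smul]
  abel

end WeightedMoments

theorem denoiser_jacobian_eq_posterior_covariance_general (n : ℕ)
    (p : EuclideanSpace ℝ (Fin n) → ℝ)
    (σ : ℝ) (hσ : 0 < σ)
    (pσ : EuclideanSpace ℝ (Fin n) → ℝ)
    (hpσ : ∀ z, pσ z = ∫ x₀, gaussPdf n σ x₀ z * p x₀)
    (N : EuclideanSpace ℝ (Fin n) → EuclideanSpace ℝ (Fin n))
    (hN : ∀ z, N z = ∫ x₀, (gaussPdf n σ x₀ z * p x₀) • x₀)
    (D : EuclideanSpace ℝ (Fin n) → EuclideanSpace ℝ (Fin n))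
    (hD : ∀ z, D z = (pσ z)⁻¹ • N z)
    (x : EuclideanSpace ℝ (Fin n))
    (hpos : 0 < pσ x)
    -- differentiation under the integral sign is valid:
    (hdiff_pσ : DifferentiableAt ℝ pσ x)
    (hdiff_N : DifferentiableAt ℝ N x)
    (hfderiv_pσ : ∀ v, fderiv ℝ pσ x v
      = ∫ x₀, (gaussPdf n σ x₀ x * p x₀ / σ ^ 2) * ⟪x₀ - x, v⟫)
    (hfderiv_N : ∀ v, fderiv ℝ N x v
      = ∫ x₀, ((gaussPdf n σ x₀ x * p x₀ / σ ^ 2) * ⟪x₀ - x, v⟫) • x₀)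
    -- integrability of the relevant second moments:
    (hint : Integrable fun x₀ => gaussPdf n σ x₀ x * p x₀)
    (hint1 : Integrable fun x₀ => (gaussPdf n σ x₀ x * p x₀) • x₀)
    (hint2 : Integrable fun x₀ => (gaussPdf n σ x₀ x * p x₀) * ‖x₀‖ ^ 2) :
    ∀ v, σ ^ 2 • fderiv ℝ D x v
      = ∫ x₀, ((gaussPdf n σ x₀ x * p x₀ / pσ x) * ⟪x₀ - D x, v⟫) • (x₀ - D x) := by
  intro v
  have hσ2 : σ ^ 2 ≠ 0 := pow_ne_zero 2 hσ.ne'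
  have hpσx : pσ x ≠ 0 := hpos.ne'
  have hDx : pσ x • D x = N x := by rw [hD, smul_inv_smul₀ hpσx]
  rw [funext hD, fderiv_inv_smul_apply hdiff_pσ hdiff_N hpσx, ← funext hD, hfderiv_N,
    hfderiv_pσ, integral_div_mul_smul, integral_div_mul, integral_div_mul_smul,
    integral_mul_inner_sub_smul hint.aestronglyMeasurable hint1 hint2,
    integral_mul_inner_sub hint hint1,
    integral_mul_inner_sub_smul_sub hint hint1 hint2 (by rw [← hpσ, ← hN, hDx]),
    ← hpσ, ← hN, ← hDx]
  simp only [inner_smul_left, RCLike.conj_to_real]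
  match_scalars <;> field_simp; ring

/-- The Jacobian of the posterior-mean denoiser equals the scaled posterior covariance:
`σ² ⬝ ∂D/∂x = Cov[x₀ | x]`, stated directionally: for every direction `v`,
`σ² (∂D/∂x) v = ∫ (x₀ − D x) ⟪x₀ − D x, v⟫ q(x₀|x) dx₀`,
where `q(x₀|x) = N(x; x₀, σ²I) p(x₀) / p_σ(x)` is the posterior. Regularity allowing
differentiation under the integral sign is encoded by the `fderiv` hypotheses. -/
theorem denoiser_jacobian_eq_posterior_covariance (n : ℕ)
    (p : EuclideanSpace ℝ (Fin n) → ℝ)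
    (hp_nonneg : ∀ x, 0 ≤ p x)
    (hp_prob : ∫ x, p x = 1)
    (σ : ℝ) (hσ : 0 < σ)
    (pσ : EuclideanSpace ℝ (Fin n) → ℝ)
    (hpσ : ∀ z, pσ z = ∫ x₀, gaussPdf n σ x₀ z * p x₀)
    (N : EuclideanSpace ℝ (Fin n) → EuclideanSpace ℝ (Fin n))
    (hN : ∀ z, N z = ∫ x₀, (gaussPdf n σ x₀ z * p x₀) • x₀)
    (D : EuclideanSpace ℝ (Fin n) → EuclideanSpace ℝ (Fin n))
    (hD : ∀ z, D z = (pσ z)⁻¹ • N z)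
    (x : EuclideanSpace ℝ (Fin n))
    (hpos : 0 < pσ x)
    -- differentiation under the integral sign is valid:
    (hdiff_pσ : DifferentiableAt ℝ pσ x)
    (hdiff_N : DifferentiableAt ℝ N x)
    (hfderiv_pσ : ∀ v, fderiv ℝ pσ x v
      = ∫ x₀, (gaussPdf n σ x₀ x * p x₀ / σ ^ 2) * ⟪x₀ - x, v⟫)
    (hfderiv_N : ∀ v, fderiv ℝ N x v
      = ∫ x₀, ((gaussPdf n σ x₀ x * p x₀ / σ ^ 2) * ⟪x₀ - x, v⟫) • x₀)
    -- integrability of the relevant second moments: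
    (hint : Integrable fun x₀ => gaussPdf n σ x₀ x * p x₀)
    (hint1 : Integrable fun x₀ => (gaussPdf n σ x₀ x * p x₀) • x₀)
    (hint2 : Integrable fun x₀ => (gaussPdf n σ x₀ x * p x₀) * ‖x₀‖ ^ 2) :
    ∀ v, σ ^ 2 • fderiv ℝ D x v
      = ∫ x₀, ((gaussPdf n σ x₀ x * p x₀ / pσ x) * ⟪x₀ - D x, v⟫) • (x₀ - D x) :=
  denoiser_jacobian_eq_posterior_covariance_general n p σ hσ pσ hpσ N hN D hD x hpos hdiff_pσ
    hdiff_N hfderiv_pσ hfderiv_N hint hint1 hint2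
end

section
/- Let p₀ be a probability density on ℝⁿ, σ_t > 0, and define the posterior q_t(x₀ | x_t) ∝ N(x_t; x₀, σ_t²I) p₀(x₀) with marginal p(x_t) = ∫ N(x_t; x₀, σ_t²I) p₀(x₀) dx₀. Let y ∈ ℝᵐ and define p(x₀ | y) ∝ N(y; H x₀, σ_y²I) p₀(x₀) for a linear map H : ℝⁿ → ℝᵐ, with p(y) the corresponding marginal. Let D(x_t) = E_{q_t}[x₀ | x_t] and Cov[x₀|x_t] the posterior covariance. Then the KL divergence satisfies KL(q_t(·|x_t) ‖ p(·|y)) = − log p(x_t) − ‖D(x_t) − x_t‖²/(2σ_t²) − Tr(Cov[x₀|x_t])/(2σ_t²) + ‖y − H D(x_t)‖²/(2σ_y²) + Tr(H Cov[x₀|x_t] Hᵀ)/(2σ_y²) + C, where C = log p(y) − n log σ_t + m log σ_y − ((n−m)/2) log(2π) does not depend on x_t. -/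
open MeasureTheory Real Matrix

/-!
Because `q` and `r` carry the same prior factor `p₀`, wherever `q ≠ 0` the ratio `q / r` is a ratio
of two Gaussian likelihoods times `p(y) / p(x_t)`, so `log (q / r)` is a quadratic polynomial in
`x₀`. Its `q`-expectation therefore only involves the posterior mean `D` and covariance `C`, through
the bias–variance identity `E_q ∑ᵢ (bᵢ - (A x₀)ᵢ)² = ∑ᵢ (bᵢ - (A D)ᵢ)² + tr (A C Aᵀ)`, used once
with `A = 1, b = x_t` and once with `A = H, b = y`.
-/

theorem gpdf_pos (k : ℕ) {σ : ℝ} (hσ : σ ≠ 0) (d2 : ℝ) : 0 < gpdf k σ d2 := by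
  unfold gpdf
  positivity

theorem log_gpdf (k : ℕ) {σ : ℝ} (hσ : σ ≠ 0) (d2 : ℝ) :
    Real.log (gpdf k σ d2)
      = -(k : ℝ) / 2 * Real.log (2 * π) - k * Real.log σ - d2 / (2 * σ ^ 2) := by
  unfold gpdf
  rw [Real.log_mul (by positivity) (Real.exp_ne_zero _), Real.log_rpow (by positivity),
    Real.log_exp, Real.log_mul (by positivity) (by positivity), Real.log_pow]
  push_cast
  ring

theorem mul_log_div_of_common_factor {a b c s t : ℝ} (ha : a ≠ 0) (hb : b ≠ 0) (hs : s ≠ 0)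
    (ht : t ≠ 0) :
    a * c / s * Real.log (a * c / s / (b * c / t))
      = a * c / s * (Real.log a - Real.log b + Real.log t - Real.log s) := by
  rcases eq_or_ne c 0 with rfl | hc
  · simp
  have hratio : a * c / s / (b * c / t) = a * t / (b * s) := by field_simp
  rw [hratio, Real.log_div (by positivity) (by positivity), Real.log_mul ha ht,
    Real.log_mul hb hs]
  ring

theorem mul_dotProduct_mul_dotProduct {ι R : Type*} [Fintype ι] [CommSemiring R]
    (v u w : ι → R) (c : R) :
    c * ((v ⬝ᵥ w) * (u ⬝ᵥ w)) = ∑ j, ∑ k, v j * u k * (c * (w j * w k)) := by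
  rw [dotProduct, dotProduct, Finset.sum_mul_sum]
  simp only [Finset.mul_sum]
  exact Finset.sum_congr rfl fun j _ => Finset.sum_congr rfl fun k _ => by ring

theorem Matrix.trace_mul_mul_transpose {ι κ R : Type*} [Fintype ι] [Fintype κ] [CommSemiring R]
    (A : Matrix ι κ R) (C : Matrix κ κ R) :
    (A * C * Aᵀ).trace = ∑ i, A i ⬝ᵥ (C *ᵥ A i) := by
  simp only [trace, diag, mul_apply, transpose_apply, dotProduct, mulVec, Finset.sum_mul,
    Finset.mul_sum]
  refine Finset.sum_congr rfl fun i _ => ?_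
  rw [Finset.sum_comm]
  simp only [mul_comm, mul_left_comm]

theorem Matrix.sub_mulVec_apply_eq_sub_dotProduct {ι κ R : Type*} [Fintype κ] [CommRing R]
    (A : Matrix ι κ R) (b : ι → R) (x d : κ → R) (i : ι) :
    b i - (A *ᵥ x) i = (b i - (A *ᵥ d) i) - A i ⬝ᵥ (x - d) := by
  rw [dotProduct_sub]; simp only [mulVec]; ring

structure HasMeanCovariance {n : ℕ} (q : EuclideanSpace ℝ (Fin n) → ℝ)
    (D : EuclideanSpace ℝ (Fin n)) (C : Matrix (Fin n) (Fin n) ℝ) : Prop where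
  integral_eq_one : ∫ x, q x = 1
  integrable_smul : Integrable fun x => q x • x
  integrable_mul_norm_sq : Integrable fun x => q x * ‖x‖ ^ 2
  mean_eq : D = ∫ x, q x • x
  cov_eq : ∀ i j, C i j = ∫ x, q x * ((x i - D i) * (x j - D j))

namespace HasMeanCovariance

variable {n : ℕ} {q : EuclideanSpace ℝ (Fin n) → ℝ} {D : EuclideanSpace ℝ (Fin n)}
  {C : Matrix (Fin n) (Fin n) ℝ}

theorem integrable (h : HasMeanCovariance q D C) : Integrable q :=
  .of_integral_ne_zero (by rw [h.integral_eq_one]; exact one_ne_zero)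

theorem integrable_mul_coord (h : HasMeanCovariance q D C) (j : Fin n) :
    Integrable fun x => q x * x j := by
  simpa using (EuclideanSpace.proj (𝕜 := ℝ) j).integrable_comp h.integrable_smul

theorem integral_mul_coord (h : HasMeanCovariance q D C) (j : Fin n) :
    ∫ x, q x * x j = D j := by
  have := (EuclideanSpace.proj (𝕜 := ℝ) j).integral_comp_comm h.integrable_smul
  simp only [PiLp.proj_apply, PiLp.smul_apply, smul_eq_mul] at this
  rw [this, h.mean_eq]

theorem integrable_mul_centered (h : HasMeanCovariance q D C) (j : Fin n) :
    Integrable fun x => q x * (x j - D j) := by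
  simp_rw [mul_sub]
  exact (h.integrable_mul_coord j).sub (h.integrable.mul_const _)

theorem integral_mul_centered (h : HasMeanCovariance q D C) (j : Fin n) :
    ∫ x, q x * (x j - D j) = 0 := by
  simp_rw [mul_sub]
  rw [integral_sub (h.integrable_mul_coord j) (h.integrable.mul_const _), integral_mul_const,
    h.integral_mul_coord, h.integral_eq_one, one_mul, sub_self]

theorem integrable_mul_coord_mul_coord (h : HasMeanCovariance q D C) (j k : Fin n) :
    Integrable fun x => q x * (x j * x k) := by
  refine h.integrable_mul_norm_sq.norm.mono'
    (h.integrable.1.mul ((EuclideanSpace.proj (𝕜 := ℝ) j).continuous.mul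
      (EuclideanSpace.proj (𝕜 := ℝ) k).continuous).aestronglyMeasurable)
    (ae_of_all _ fun x => ?_)
  rw [norm_mul, norm_mul, norm_mul, norm_pow, norm_norm, sq]
  gcongr
  · exact PiLp.norm_apply_le x j
  · exact PiLp.norm_apply_le x k

theorem integrable_mul_centered_mul_centered (h : HasMeanCovariance q D C) (j k : Fin n) :
    Integrable fun x => q x * ((x j - D j) * (x k - D k)) := by
  have hexp : (fun x => q x * ((x j - D j) * (x k - D k))) = fun x =>
      q x * (x j * x k) - D k * (q x * (x j - D j)) - D j * (q x * x k) := by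
    funext x; ring
  rw [hexp]
  exact ((h.integrable_mul_coord_mul_coord j k).sub
    ((h.integrable_mul_centered j).const_mul _)).sub ((h.integrable_mul_coord k).const_mul _)

theorem integrable_mul_dotProduct (h : HasMeanCovariance q D C) (v : Fin n → ℝ) :
    Integrable fun x => q x * (v ⬝ᵥ fun j => x j - D j) := by
  simp_rw [dotProduct, Finset.mul_sum, mul_left_comm (q _)]
  exact integrable_finsetSum _ fun j _ => (h.integrable_mul_centered j).const_mul _

theorem integral_mul_dotProduct (h : HasMeanCovariance q D C) (v : Fin n → ℝ) :
    ∫ x, q x * (v ⬝ᵥ fun j => x j - D j) = 0 := by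
  simp_rw [dotProduct, Finset.mul_sum, mul_left_comm (q _)]
  rw [integral_finsetSum _ fun j _ => (h.integrable_mul_centered j).const_mul _]
  simp [integral_const_mul, h.integral_mul_centered]

theorem integrable_mul_dotProduct_mul_dotProduct (h : HasMeanCovariance q D C)
    (v u : Fin n → ℝ) :
    Integrable fun x => q x * ((v ⬝ᵥ fun j => x j - D j) * (u ⬝ᵥ fun j => x j - D j)) := by
  simp_rw [mul_dotProduct_mul_dotProduct]
  exact integrable_finsetSum _ fun j _ => integrable_finsetSum _ fun k _ =>
    (h.integrable_mul_centered_mul_centered j k).const_mul _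

theorem integral_mul_dotProduct_mul_dotProduct (h : HasMeanCovariance q D C)
    (v u : Fin n → ℝ) :
    ∫ x, q x * ((v ⬝ᵥ fun j => x j - D j) * (u ⬝ᵥ fun j => x j - D j)) = v ⬝ᵥ (C *ᵥ u) := by
  simp_rw [mul_dotProduct_mul_dotProduct]
  rw [integral_finsetSum _ fun j _ => integrable_finsetSum _ fun k _ =>
    (h.integrable_mul_centered_mul_centered j k).const_mul _]
  simp only [dotProduct, mulVec, Finset.mul_sum]
  refine Finset.sum_congr rfl fun j _ => ?_
  rw [integral_finsetSum _ fun k _ => (h.integrable_mul_centered_mul_centered j k).const_mul _]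
  refine Finset.sum_congr rfl fun k _ => ?_
  rw [integral_const_mul, ← h.cov_eq]
  ring

theorem integral_mul_sq_sub_dotProduct (h : HasMeanCovariance q D C) (c : ℝ) (v : Fin n → ℝ) :
    Integrable (fun x => q x * (c - v ⬝ᵥ fun j => x j - D j) ^ 2) ∧
      ∫ x, q x * (c - v ⬝ᵥ fun j => x j - D j) ^ 2 = c ^ 2 + v ⬝ᵥ (C *ᵥ v) := by
  have hexp : (fun x => q x * (c - v ⬝ᵥ fun j => x j - D j) ^ 2) = fun x =>
      c ^ 2 * q x - 2 * c * (q x * (v ⬝ᵥ fun j => x j - D j))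
        + q x * ((v ⬝ᵥ fun j => x j - D j) * (v ⬝ᵥ fun j => x j - D j)) := by
    funext x; ring
  have h₁ := h.integrable.const_mul (c ^ 2)
  have h₂ := (h.integrable_mul_dotProduct v).const_mul (2 * c)
  have h₃ := h.integrable_mul_dotProduct_mul_dotProduct v v
  have h₁₂ : Integrable fun x =>
      c ^ 2 * q x - 2 * c * (q x * (v ⬝ᵥ fun j => x j - D j)) := h₁.sub h₂
  rw [hexp]
  refine ⟨h₁₂.add h₃, ?_⟩
  rw [integral_add h₁₂ h₃, integral_sub h₁ h₂, integral_const_mul, integral_const_mul,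
    h.integral_eq_one, h.integral_mul_dotProduct, h.integral_mul_dotProduct_mul_dotProduct]
  ring

theorem integral_mul_sum_sq_sub_mulVec (h : HasMeanCovariance q D C) {ι : Type*} [Fintype ι]
    (A : Matrix ι (Fin n) ℝ) (b : ι → ℝ) :
    Integrable (fun x => q x * ∑ i, (b i - (A *ᵥ fun k => x k) i) ^ 2) ∧
      ∫ x, q x * ∑ i, (b i - (A *ᵥ fun k => x k) i) ^ 2
        = ∑ i, (b i - (A *ᵥ fun k => D k) i) ^ 2 + (A * C * Aᵀ).trace := by
  have hrow : (fun x : EuclideanSpace ℝ (Fin n) =>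
      q x * ∑ i, (b i - (A *ᵥ fun k => x k) i) ^ 2)
        = fun x =>
          ∑ i, q x * ((b i - (A *ᵥ fun k => D k) i) - A i ⬝ᵥ fun j => x j - D j) ^ 2 := by
    funext x
    rw [Finset.mul_sum]
    simp_rw [A.sub_mulVec_apply_eq_sub_dotProduct b (fun k => x k) (fun k => D k)]
    rfl
  have hterm (i : ι) := h.integral_mul_sq_sub_dotProduct (b i - (A *ᵥ fun k => D k) i) (A i)
  rw [hrow]
  refine ⟨integrable_finsetSum _ fun i _ => (hterm i).1, ?_⟩
  rw [integral_finsetSum _ fun i _ => (hterm i).1, trace_mul_mul_transpose,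
    ← Finset.sum_add_distrib]
  exact Finset.sum_congr rfl fun i _ => (hterm i).2

end HasMeanCovariance

theorem vml_closed_form_linear_general (n m : ℕ)
    (p0 : EuclideanSpace ℝ (Fin n) → ℝ)
    (σt σy : ℝ) (hσt : 0 < σt) (hσy : 0 < σy)
    (xt : EuclideanSpace ℝ (Fin n)) (y : Fin m → ℝ)
    (H : Matrix (Fin m) (Fin n) ℝ)
    (pxt : ℝ) (hpxt : pxt = ∫ x₀, gaussPdf n σt x₀ xt * p0 x₀) (hpxt_pos : 0 < pxt)
    (py : ℝ)
    (hpy_pos : 0 < py)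
    (q r : EuclideanSpace ℝ (Fin n) → ℝ)
    (hq : ∀ x₀, q x₀ = gaussPdf n σt x₀ xt * p0 x₀ / pxt)
    (hr : ∀ x₀, r x₀ = gpdf m σy (∑ i, (y i - H.mulVec (fun k => x₀ k) i) ^ 2) * p0 x₀ / py)
    (D : EuclideanSpace ℝ (Fin n)) (hD : D = ∫ x₀, q x₀ • x₀)
    (C : Matrix (Fin n) (Fin n) ℝ)
    (hC : ∀ i j, C i j = ∫ x₀, q x₀ * ((x₀ i - D i) * (x₀ j - D j)))
    -- all integrals are assumed finite:
    (hInt2 : Integrable fun x₀ => q x₀ • x₀)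
    (hInt3 : Integrable fun x₀ => q x₀ * ‖x₀‖ ^ 2) :
    ∫ x₀, q x₀ * Real.log (q x₀ / r x₀)
      = -Real.log pxt - ‖D - xt‖ ^ 2 / (2 * σt ^ 2) - C.trace / (2 * σt ^ 2)
        + (∑ i, (y i - H.mulVec (fun k => D k) i) ^ 2) / (2 * σy ^ 2)
        + (H * C * Hᵀ).trace / (2 * σy ^ 2)
        + (Real.log py - n * Real.log σt + m * Real.log σy
            - ((n : ℝ) - m) / 2 * Real.log (2 * Real.pi)) := by
  have hmc : HasMeanCovariance q D C := by
    refine ⟨?_, hInt2, hInt3, hD, hC⟩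
    simp_rw [hq]
    rw [integral_div, ← hpxt, div_self hpxt_pos.ne']
  obtain ⟨hI₁, hE₁⟩ := hmc.integral_mul_sum_sq_sub_mulVec 1 (fun k => xt k)
  obtain ⟨hI₂, hE₂⟩ := hmc.integral_mul_sum_sq_sub_mulVec H y
  simp only [one_mulVec, transpose_one, mul_one, one_mul] at hI₁ hE₁
  have hnorm (v w : EuclideanSpace ℝ (Fin n)) : ‖v - w‖ ^ 2 = ∑ i, (v i - w i) ^ 2 := by
    simp [EuclideanSpace.real_norm_sq_eq]
  set K := Real.log py - Real.log pxt - n * Real.log σt + m * Real.log σy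
    - ((n : ℝ) - m) / 2 * Real.log (2 * π)
  have hlog (x : EuclideanSpace ℝ (Fin n)) : q x * Real.log (q x / r x)
      = K * q x - q x * (∑ i, (xt i - x i) ^ 2) / (2 * σt ^ 2)
        + q x * (∑ i, (y i - (H *ᵥ fun k => x k) i) ^ 2) / (2 * σy ^ 2) := by
    rw [hq, hr, gaussPdf, mul_log_div_of_common_factor (gpdf_pos n hσt.ne' _).ne'
      (gpdf_pos m hσy.ne' _).ne' hpxt_pos.ne' hpy_pos.ne', log_gpdf n hσt.ne', log_gpdf m hσy.ne',
      hnorm]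
    ring
  have hI₀ : Integrable fun x => K * q x - q x * (∑ i, (xt i - x i) ^ 2) / (2 * σt ^ 2) :=
    (hmc.integrable.const_mul K).sub (hI₁.div_const _)
  simp_rw [hlog]
  rw [integral_add hI₀ (hI₂.div_const _),
    integral_sub (hmc.integrable.const_mul K) (hI₁.div_const _), integral_const_mul,
    integral_div, integral_div, hmc.integral_eq_one, hE₁, hE₂, norm_sub_rev, hnorm]
  ring

/-- **Closed form of the variational mode-seeking loss (linear case).**
With diffusion posterior `q(x₀|x_t) ∝ N(x_t; x₀, σ_t²I) p₀(x₀)` and measurement posterior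
`r(x₀|y) ∝ N(y; H x₀, σ_y²I) p₀(x₀)`, posterior mean `D` and covariance matrix `C`,
`KL(q ‖ r) = − log p(x_t) − ‖D − x_t‖²/(2σ_t²) − Tr C/(2σ_t²) + ‖y − H D‖²/(2σ_y²)
 + Tr (H C Hᵀ)/(2σ_y²) + C₀`, where
`C₀ = log p(y) − n log σ_t + m log σ_y − ((n−m)/2) log (2π)`. -/
theorem vml_closed_form_linear (n m : ℕ)
    (p0 : EuclideanSpace ℝ (Fin n) → ℝ)
    (hp0_nonneg : ∀ x, 0 ≤ p0 x) (hp0_prob : ∫ x, p0 x = 1)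
    (σt σy : ℝ) (hσt : 0 < σt) (hσy : 0 < σy)
    (xt : EuclideanSpace ℝ (Fin n)) (y : Fin m → ℝ)
    (H : Matrix (Fin m) (Fin n) ℝ)
    (pxt : ℝ) (hpxt : pxt = ∫ x₀, gaussPdf n σt x₀ xt * p0 x₀) (hpxt_pos : 0 < pxt)
    (py : ℝ)
    (hpy : py = ∫ x₀, gpdf m σy (∑ i, (y i - H.mulVec (fun k => x₀ k) i) ^ 2) * p0 x₀)
    (hpy_pos : 0 < py)
    (q r : EuclideanSpace ℝ (Fin n) → ℝ)
    (hq : ∀ x₀, q x₀ = gaussPdf n σt x₀ xt * p0 x₀ / pxt)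
    (hr : ∀ x₀, r x₀ = gpdf m σy (∑ i, (y i - H.mulVec (fun k => x₀ k) i) ^ 2) * p0 x₀ / py)
    (D : EuclideanSpace ℝ (Fin n)) (hD : D = ∫ x₀, q x₀ • x₀)
    (C : Matrix (Fin n) (Fin n) ℝ)
    (hC : ∀ i j, C i j = ∫ x₀, q x₀ * ((x₀ i - D i) * (x₀ j - D j)))
    -- all integrals are assumed finite:
    (hInt1 : Integrable fun x₀ => q x₀ * Real.log (q x₀ / r x₀))
    (hInt2 : Integrable fun x₀ => q x₀ • x₀)
    (hInt3 : Integrable fun x₀ => q x₀ * ‖x₀‖ ^ 2)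
    (hInt4 : Integrable fun x₀ => q x₀ * ∑ i, (y i - H.mulVec (fun k => x₀ k) i) ^ 2) :
    ∫ x₀, q x₀ * Real.log (q x₀ / r x₀)
      = -Real.log pxt - ‖D - xt‖ ^ 2 / (2 * σt ^ 2) - C.trace / (2 * σt ^ 2)
        + (∑ i, (y i - H.mulVec (fun k => D k) i) ^ 2) / (2 * σy ^ 2)
        + (H * C * Hᵀ).trace / (2 * σy ^ 2)
        + (Real.log py - n * Real.log σt + m * Real.log σy
            - ((n : ℝ) - m) / 2 * Real.log (2 * Real.pi)) :=
  vml_closed_form_linear_general n m p0 σt σy hσt hσy xt y H pxt hpxt hpxt_pos py hpy_pos q r hq hr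
    D hD C hC hInt2 hInt3
end
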